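/- The truncated Seiberg–Witten map of the deformed abelian Chern–Simons theory maps gauge orbits to gauge orbits up to third order in the deformation: for all smooth λ: ℝ³ → ℝ and A: ℝ³ → ℝ³, the expression (d/ds)|_{s=0} Âₜ(A + s∇λ) − δ̂ₜ,λ( Âₜ(A) ) is a polynomial in t with smooth vector-field coefficients, and its coefficients in t-degrees 0, 1 and 2 all vanish. -/
import Mathlib


/- STATEMENT 7: the truncated Seiberg–Witten map maps gauge orbits to gauge
orbits up to third order in the deformation parameter t:
(d/ds)|₀ Âₜ(A + s∇λ) − δ̂ₜ,λ(Âₜ(A)) is a polynomial in t with smooth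
vector-field coefficients whose coefficients in t-degrees 0, 1, 2 vanish. -/

noncomputable section

abbrev V3 := Fin 3 → ℝ

/-- Partial derivative ∂_i f at x. -/
def pd (f : V3 → ℝ) (i : Fin 3) (x : V3) : ℝ :=
  fderiv ℝ f x (Pi.single i 1)

/-- Truncated Seiberg–Witten field redefinition
  Âₜ(A) = A − t(v·A)A + ½t²(v·A)²A. -/
def hatA (v : V3) (t : ℝ) (A : V3 → V3) : V3 → V3 :=
  fun x a => A x a - t * (∑ i, v i * A x i) * A x a
    + (1 / 2) * t ^ 2 * (∑ i, v i * A x i) ^ 2 * A x a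

/-- Truncated deformed gauge transformation
  δ̂ₜ,λ(B) = ∇λ − t(v·B)∇λ − t(v·∇λ)B − ½t²(v·B)²∇λ. -/
def hdelta (v : V3) (t : ℝ) (lam : V3 → ℝ) (B : V3 → V3) : V3 → V3 :=
  fun x a => pd lam a x - t * (∑ i, v i * B x i) * pd lam a x
    - t * (∑ i, v i * pd lam i x) * B x a
    - (1 / 2) * t ^ 2 * (∑ i, v i * B x i) ^ 2 * pd lam a x

lemma deriv_cubic (a b c d : ℝ) :
    deriv (fun s : ℝ => a + b * s + c * s ^ 2 + d * s ^ 3) 0 = b := by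
  have h : HasDerivAt (fun s : ℝ => a + b * s + c * s ^ 2 + d * s ^ 3)
      (0 + b * 1 + c * ((2 : ℕ) * (0:ℝ) ^ (2 - 1)) + d * ((3 : ℕ) * (0:ℝ) ^ (3 - 1))) 0 :=
    (((hasDerivAt_const 0 a).add ((hasDerivAt_id 0).const_mul b)).add
      ((hasDerivAt_pow 2 0).const_mul c)).add ((hasDerivAt_pow 3 0).const_mul d)
  simpa using h.deriv

lemma pd_smooth (lam : V3 → ℝ) (hlam : ContDiff ℝ (⊤ : ℕ∞) lam) (a : Fin 3) :
    ContDiff ℝ (⊤ : ℕ∞) (fun x => pd lam a x) := by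
  have h1 : ContDiff ℝ (⊤ : ℕ∞) (fderiv ℝ lam) := hlam.fderiv_right (by simp)
  exact (ContinuousLinearMap.apply ℝ ℝ (Pi.single a 1)).contDiff.comp h1

theorem truncated_SW_maps_gauge_orbits
    (v : V3) (lam : V3 → ℝ) (A : V3 → V3)
    (hlam : ContDiff ℝ (⊤ : ℕ∞) lam) (hA : ContDiff ℝ (⊤ : ℕ∞) A) :
    ∃ (N : ℕ) (c : ℕ → V3 → V3),
      (∀ k, ContDiff ℝ (⊤ : ℕ∞) (c k)) ∧
      (∀ (t : ℝ) (x : V3) (a : Fin 3),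
        deriv (fun s : ℝ =>
            hatA v t (fun y b => A y b + s * pd lam b y) x a) 0
          - hdelta v t lam (hatA v t A) x a
        = ∑ k ∈ Finset.range (N + 1), c k x a * t ^ k) ∧
      c 0 = 0 ∧ c 1 = 0 ∧ c 2 = 0 := by
  set u : V3 → ℝ := fun x => ∑ i, v i * A x i with hu
  set w : V3 → ℝ := fun x => ∑ i, v i * pd lam i x with hw
  have hu_smooth : ContDiff ℝ (⊤ : ℕ∞) u := by
    apply ContDiff.sum
    intro i _
    exact (contDiff_const (c := v i)).mul ((contDiff_pi.mp hA) i)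
  have hw_smooth : ContDiff ℝ (⊤ : ℕ∞) w := by
    apply ContDiff.sum
    intro i _
    exact (contDiff_const (c := v i)).mul (pd_smooth lam hlam i)
  refine ⟨6, fun k x a =>
    if k = 3 then
      (1/2) * (u x) ^ 2 * w x * A x a - (1/2) * (u x) ^ 3 * pd lam a x
    else if k = 4 then (u x) ^ 4 * pd lam a x
    else if k = 5 then -(1/2) * (u x) ^ 5 * pd lam a x
    else if k = 6 then (1/8) * (u x) ^ 6 * pd lam a x
    else 0, ?_, ?_, by funext x a; simp, by funext x a; simp, by funext x a; simp⟩
  · intro k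
    rcases eq_or_ne k 3 with rfl | h3
    · simp only [if_pos rfl]
      apply contDiff_pi.mpr
      intro a
      exact (((contDiff_const.mul (hu_smooth.pow 2)).mul hw_smooth).mul
        ((contDiff_pi.mp hA) a)).sub
        ((contDiff_const.mul (hu_smooth.pow 3)).mul (pd_smooth lam hlam a))
    rcases eq_or_ne k 4 with rfl | h4
    · norm_num only
      apply contDiff_pi.mpr
      intro a
      exact (hu_smooth.pow 4).mul (pd_smooth lam hlam a)
    rcases eq_or_ne k 5 with rfl | h5
    · norm_num only
      apply contDiff_pi.mpr
      intro a
      exact (contDiff_const.mul (hu_smooth.pow 5)).mul (pd_smooth lam hlam a)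
    rcases eq_or_ne k 6 with rfl | h6
    · norm_num only
      apply contDiff_pi.mpr
      intro a
      exact (contDiff_const.mul (hu_smooth.pow 6)).mul (pd_smooth lam hlam a)
    · simp only [if_neg h3, if_neg h4, if_neg h5, if_neg h6]
      exact contDiff_const
  · intro t x a
    have hsum : ∀ s : ℝ, ∑ i, v i * (A x i + s * pd lam i x) = u x + s * w x := by
      intro s
      simp only [hu, hw, mul_add, Finset.sum_add_distrib, Finset.mul_sum]
      congr 1
      exact Finset.sum_congr rfl (fun i _ => by ring)
    have hsumB : ∑ i, v i * hatA v t A x i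
        = u x - t * (u x) ^ 2 + (1/2) * t ^ 2 * (u x) ^ 3 := by
      have step : ∑ i, v i * hatA v t A x i
          = ∑ i, (v i * A x i) * (1 - t * u x + (1/2) * t ^ 2 * (u x) ^ 2) :=
        Finset.sum_congr rfl (fun i _ => by simp only [hatA]; ring)
      rw [step, ← Finset.sum_mul]
      ring
    have hfun : (fun s : ℝ =>
        hatA v t (fun y b => A y b + s * pd lam b y) x a)
        = fun s : ℝ =>
          (A x a - t * u x * A x a + (1/2) * t ^ 2 * (u x) ^ 2 * A x a)
          + (pd lam a x - t * (u x * pd lam a x + w x * A x a)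
              + (1/2) * t ^ 2 * ((u x) ^ 2 * pd lam a x + 2 * u x * w x * A x a)) * s
          + ((1/2) * t ^ 2 * (2 * u x * w x * pd lam a x + (w x) ^ 2 * A x a)
              - t * w x * pd lam a x) * s ^ 2
          + ((1/2) * t ^ 2 * (w x) ^ 2 * pd lam a x) * s ^ 3 := by
      funext s
      simp only [hatA, hsum s]
      ring
    rw [hfun, deriv_cubic]
    simp only [hdelta]
    rw [hsumB]
    simp only [hatA]
    have hux : (∑ i, v i * A x i) = u x := rfl
    rw [hux]
    simp only [Finset.sum_range_succ, Finset.sum_range_one]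
    norm_num
    ring
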